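/- For every real number t with |t| ≤ 1, the matrix L(t)·L(t)ᵀ − (3 − 2√2)·I₄ is positive semidefinite, where L(t) is the 4×4 real matrix [[1,0,0,0],[0,1,0,0],[t,t,1,0],[t,t,0,1]]. -/

import Mathlib

/-!
For `s = (x₂ + x₃) / 2` we have `‖Lᵀx‖² = ∑_{i = 0, 1} ((xᵢ + 2t s)² + s²) + (x₂ - x₃)² / 2`.
Each summand is the squared norm of the shear `!![1, 2t; 0, 1]` applied to `(xᵢ, s)`, and for
`|2t| ≤ 2` the squared smallest singular value of that shear is at least `3 - 2√2`
(with equality at `|2t| = 2`).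
-/

open Matrix

theorem Matrix.posSemidef_mul_transpose_sub_smul_one {n : Type*} [Fintype n] [DecidableEq n]
    (A : Matrix n n ℝ) (c : ℝ) (h : ∀ x, c * (x ⬝ᵥ x) ≤ (Aᵀ *ᵥ x) ⬝ᵥ (Aᵀ *ᵥ x)) :
    (A * Aᵀ - c • 1).PosSemidef := by
  rw [posSemidef_iff_dotProduct_mulVec]
  refine ⟨by simp [IsHermitian, transpose_mul], fun x => ?_⟩
  rw [sub_mulVec, ← mulVec_mulVec, dotProduct_sub, smul_mulVec, one_mulVec, dotProduct_smul,
    dotProduct_mulVec, star_trivial, ← mulVec_transpose, smul_eq_mul]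
  linarith [h x]

theorem three_sub_two_sqrt_two_mul_sq_add_sq_le (k x y : ℝ) (hk : |k| ≤ 2) :
    (3 - 2 * √2) * (x ^ 2 + y ^ 2) ≤ (x + k * y) ^ 2 + y ^ 2 := by
  set c := 3 - 2 * √2
  have hc : 0 ≤ c := by linarith [Real.sqrt_two_lt_three_halves]
  have hc_lt_one : 0 < 1 - c := by linarith [Real.one_lt_sqrt_two]
  have hk2 : k ^ 2 ≤ 4 := by nlinarith [sq_abs k, abs_nonneg k]
  -- `(1 - c)² = 4c`, so multiplying the difference by `1 - c` completes the square.
  have hmul : (1 - c) * ((x + k * y) ^ 2 + y ^ 2 - c * (x ^ 2 + y ^ 2))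
      = ((1 - c) * x + k * y) ^ 2 + c * (4 - k ^ 2) * y ^ 2 := by
    have hsqrt : √2 ^ 2 = 2 := Real.sq_sqrt zero_le_two
    linear_combination 4 * y ^ 2 * hsqrt
  have hprod : 0 ≤ (1 - c) * ((x + k * y) ^ 2 + y ^ 2 - c * (x ^ 2 + y ^ 2)) := by
    rw [hmul]
    exact add_nonneg (sq_nonneg _) (mul_nonneg (mul_nonneg hc (sub_nonneg.mpr hk2)) (sq_nonneg y))
  linarith [(mul_nonneg_iff_of_pos_left hc_lt_one).mp hprod]

theorem vertical_noise_eigenvalue_bound_const (t : ℝ) (ht : |t| ≤ 1) :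
    ((!![1, 0, 0, 0;
         0, 1, 0, 0;
         t, t, 1, 0;
         t, t, 0, 1] : Matrix (Fin 4) (Fin 4) ℝ)
      * (!![1, 0, 0, 0;
            0, 1, 0, 0;
            t, t, 1, 0;
            t, t, 0, 1] : Matrix (Fin 4) (Fin 4) ℝ)ᵀ
      - (3 - 2 * Real.sqrt 2) • 1).PosSemidef := by
  refine posSemidef_mul_transpose_sub_smul_one _ _ fun x => ?_
  have h2t : |2 * t| ≤ 2 := by rw [abs_mul, abs_two]; linarith
  have h0 := three_sub_two_sqrt_two_mul_sq_add_sq_le (2 * t) (x 0) ((x 2 + x 3) / 2) h2t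
  have h1 := three_sub_two_sqrt_two_mul_sq_add_sq_le (2 * t) (x 1) ((x 2 + x 3) / 2) h2t
  have hc : 3 - 2 * √2 ≤ 1 := by linarith [Real.one_lt_sqrt_two]
  simp only [dotProduct, Fin.sum_univ_four, mulVec, transpose_apply, of_apply, cons_val',
    cons_val_fin_one, cons_val_zero, cons_val_one, cons_val, one_mul, zero_mul, add_zero, zero_add]
  linarith [mul_nonneg (sub_nonneg.mpr hc) (sq_nonneg (x 2 - x 3))]
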